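/- Let Y and Z be finite sets and let A ∈ DCCone(Y) and B ∈ DCCone(Z) be nonempty. Then I(A ⊗ B) = I(A ⋉ B) = I(A) + I(B). -/
import Mathlib

open scoped BigOperators

noncomputable section

/-- `A ⊆ ℝ^Y` is a pricing downward closed (DC) cone. -/
def IsDCCone {Y : Type*} (A : Set (Y → ℝ)) : Prop :=
  (∀ a ∈ A, ∀ γ : ℝ, 0 ≤ γ → γ • a ∈ A) ∧
  (∀ a ∈ A, ∀ b : Y → ℝ, (∀ y, 0 ≤ b y) → a - b ∈ A)

/-- Probability mass functions on a finite set `Y`. -/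
def probSimplex (Y : Type*) [Fintype Y] : Set (Y → ℝ) :=
  {p | (∀ y, 0 ≤ p y) ∧ ∑ y, p y = 1}

/-- KL divergence in bits, valued in the extended reals. -/
def KLdiv {Y : Type*} [Fintype Y] (p q : Y → ℝ) : EReal :=
  if ∀ y, q y = 0 → p y = 0 then
    (((∑ y, if p y = 0 then 0 else p y * Real.logb 2 (p y / q y)) : ℝ) : EReal)
  else ⊤

/-- Information capacity `I(A)` of a pricing DC cone `A`.  The conventions
`I(∅) = -∞` and `I(ℝ^Y) = +∞` follow from `⨆ (empty) = ⊥` and `⨅ (empty) = ⊤`. -/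
def infoCap {Y : Type*} [Fintype Y] (A : Set (Y → ℝ)) : EReal :=
  ⨅ q ∈ probSimplex Y, ⨆ a ∈ A,
    ⨅ p ∈ {p ∈ probSimplex Y | ∑ y, p y * a y ≤ 0}, KLdiv p q

/-- Product `A ⊗ B` of pricing DC cones. -/
def prodCone {Y Z : Type*} (A : Set (Y → ℝ)) (B : Set (Z → ℝ)) :
    Set (Y × Z → ℝ) :=
  {s | ∃ a ∈ A, ∃ b ∈ B, ∃ c : Y × Z → ℝ, (∀ q, 0 ≤ c q) ∧
    s = fun q => a q.1 + b q.2 - c q}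

/-- Semidirect product `A ⋉ B` of pricing DC cones. -/
def semiProdCone {Y Z : Type*} (A : Set (Y → ℝ)) (B : Set (Z → ℝ)) :
    Set (Y × Z → ℝ) :=
  {s | ∃ a ∈ A, ∃ f : Y → Z → ℝ, (∀ y, f y ∈ B) ∧ s = fun q => a q.1 + f q.1 q.2}

namespace InfoCapAux

open Real Filter Topology Finset

def pw (t : ℝ) : ℝ := Real.exp (Real.log 2 * t)

lemma pw_pos (t : ℝ) : 0 < pw t := Real.exp_pos _

lemma pw_ne (t : ℝ) : pw t ≠ 0 := (pw_pos t).ne'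

lemma pw_zero : pw 0 = 1 := by simp [pw]

lemma log2_pos : (0:ℝ) < Real.log 2 := Real.log_pos one_lt_two

lemma pw_add (s t : ℝ) : pw (s + t) = pw s * pw t := by
  simp [pw, mul_add, Real.exp_add]

lemma logb_pw (t : ℝ) : Real.logb 2 (pw t) = t := by
  rw [pw, Real.logb, Real.log_exp, mul_comm, mul_div_assoc, div_self log2_pos.ne', mul_one]

lemma pw_logb {x : ℝ} (hx : 0 < x) : pw (Real.logb 2 x) = x := by
  rw [pw, Real.logb, mul_comm, div_mul_cancel₀ _ log2_pos.ne', Real.exp_log hx]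

lemma pw_le_pw {s t : ℝ} (h : s ≤ t) : pw s ≤ pw t :=
  Real.exp_le_exp.2 (by nlinarith [log2_pos])

lemma pw_lt_pw {s t : ℝ} (h : s < t) : pw s < pw t :=
  Real.exp_lt_exp.2 (by nlinarith [log2_pos])

variable {Y : Type*} [Fintype Y]

def Efun (a q : Y → ℝ) : ℝ := ∑ y, q y * pw (-a y)

def Ffun (a q : Y → ℝ) : ℝ := - Real.logb 2 (Efun a q)

lemma exists_ne_zero {q : Y → ℝ} (hq : q ∈ probSimplex Y) : ∃ y, q y ≠ 0 := by
  by_contra h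
  push_neg at h
  have h0 : ∑ y, q y = 0 := Finset.sum_eq_zero fun y _ => h y
  rw [hq.2] at h0
  norm_num at h0

lemma Efun_pos {a q : Y → ℝ} (hq : q ∈ probSimplex Y) : 0 < Efun a q := by
  obtain ⟨y₀, hy₀⟩ := exists_ne_zero hq
  refine Finset.sum_pos' (fun y _ => mul_nonneg (hq.1 y) (pw_pos _).le)
    ⟨y₀, Finset.mem_univ _, ?_⟩
  exact mul_pos ((hq.1 y₀).lt_of_ne (Ne.symm hy₀)) (pw_pos _)

lemma Efun_smul (lam : ℝ) (a q : Y → ℝ) :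
    Efun (lam • a) q = ∑ y, q y * pw (-(lam * a y)) := by
  simp [Efun, Pi.smul_apply, smul_eq_mul]

/-- Gibbs' inequality. -/
lemma gibbs (p m : Y → ℝ) (hp0 : ∀ y, 0 ≤ p y) (hp1 : ∑ y, p y = 1)
    (hm0 : ∀ y, 0 ≤ m y) (hm : ∀ y, p y ≠ 0 → 0 < m y) :
    - Real.logb 2 (∑ y, m y) ≤
      ∑ y, (if p y = 0 then 0 else p y * Real.logb 2 (p y / m y)) := by
  classical
  set t := Finset.univ.filter (fun y => p y ≠ 0) with ht
  have htmem : ∀ y ∈ t, p y ≠ 0 := fun y hy => (Finset.mem_filter.1 hy).2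
  have htsum : ∑ y ∈ t, p y = 1 := by
    rw [ht, Finset.sum_filter_ne_zero]
    exact hp1
  have htne : ∃ y, p y ≠ 0 := by
    by_contra h
    push_neg at h
    have h0 : ∑ y, p y = 0 := Finset.sum_eq_zero fun y _ => h y
    rw [hp1] at h0
    norm_num at h0
  have hmem : ∀ y ∈ t, m y / p y ∈ Set.Ioi (0:ℝ) := fun y hy =>
    div_pos (hm y (htmem y hy)) ((hp0 y).lt_of_ne (Ne.symm (htmem y hy)))
  have jensen := (strictConcaveOn_log_Ioi.concaveOn).le_map_sum
      (fun y (_ : y ∈ t) => hp0 y) htsum hmem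
  have hsimp : ∑ y ∈ t, p y • (m y / p y) = ∑ y ∈ t, m y :=
    Finset.sum_congr rfl fun y hy => by
      rw [smul_eq_mul, mul_comm, div_mul_cancel₀ _ (htmem y hy)]
  have hpos : 0 < ∑ y ∈ t, m y := by
    obtain ⟨y₀, hy₀⟩ := htne
    refine Finset.sum_pos' (fun y hy => (hm y (htmem y hy)).le) ⟨y₀, ?_, hm y₀ hy₀⟩
    simp [ht, hy₀]
  have hle : ∑ y ∈ t, m y ≤ ∑ y, m y :=
    Finset.sum_le_sum_of_subset_of_nonneg (Finset.subset_univ _) (fun y _ _ => hm0 y)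
  have hlog : ∑ y ∈ t, p y * Real.log (m y / p y) ≤ Real.log (∑ y, m y) := by
    calc ∑ y ∈ t, p y * Real.log (m y / p y)
        ≤ Real.log (∑ y ∈ t, m y) := by
          have := jensen
          rw [hsimp] at this
          simpa [smul_eq_mul] using this
      _ ≤ Real.log (∑ y, m y) := Real.log_le_log hpos hle
  have hrw : ∑ y, (if p y = 0 then 0 else p y * Real.logb 2 (p y / m y))
      = ∑ y ∈ t, p y * Real.logb 2 (p y / m y) := by
    rw [ht, Finset.sum_filter]
    exact Finset.sum_congr rfl fun y _ => by by_cases h : p y = 0 <;> simp [h]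
  have hconv : ∑ y ∈ t, p y * Real.logb 2 (p y / m y)
      = (∑ y ∈ t, p y * (- Real.log (m y / p y))) / Real.log 2 := by
    rw [Finset.sum_div]
    refine Finset.sum_congr rfl fun y hy => ?_
    rw [Real.logb, show Real.log (p y / m y) = - Real.log (m y / p y) by
      rw [← Real.log_inv, inv_div]]
    ring
  have hsum_neg : ∑ y ∈ t, p y * (- Real.log (m y / p y))
      = - ∑ y ∈ t, p y * Real.log (m y / p y) := by
    rw [← Finset.sum_neg_distrib]
    exact Finset.sum_congr rfl fun y _ => by ring
  rw [hrw, hconv, hsum_neg, Real.logb]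
  have h2 : - Real.log (∑ y, m y) ≤ - ∑ y ∈ t, p y * Real.log (m y / p y) := by linarith
  have h3 := div_le_div_of_nonneg_right h2 log2_pos.le
  rw [neg_div] at h3
  exact h3

/-- Weak duality: `F(a,q) ≤ KL(p‖q)` for feasible `p`. -/
lemma F_le_KLdiv (a p q : Y → ℝ) (hq : q ∈ probSimplex Y) (hp : p ∈ probSimplex Y)
    (hpa : ∑ y, p y * a y ≤ 0) : ((Ffun a q : ℝ) : EReal) ≤ KLdiv p q := by
  classical
  rw [KLdiv]
  by_cases h : ∀ y, q y = 0 → p y = 0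
  · rw [if_pos h, EReal.coe_le_coe_iff]
    have key : ∀ y, (if p y = 0 then 0 else p y * Real.logb 2 (p y / q y))
        = (if p y = 0 then 0 else p y * Real.logb 2 (p y / (q y * pw (-a y)))) - p y * a y := by
      intro y
      by_cases hp0 : p y = 0
      · simp [hp0]
      · have hq0 : q y ≠ 0 := fun hq0 => hp0 (h y hq0)
        rw [if_neg hp0, if_neg hp0]
        have hrw : p y / q y = (p y / (q y * pw (-a y))) * pw (-a y) := by
          rw [div_mul_eq_mul_div, mul_div_mul_right _ _ (pw_ne _)]
        rw [hrw, Real.logb_mul (div_ne_zero hp0 (mul_ne_zero hq0 (pw_ne _))) (pw_ne _),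
          logb_pw]
        ring
    rw [Finset.sum_congr rfl (fun y _ => key y), Finset.sum_sub_distrib]
    have hgibbs := gibbs p (fun y => q y * pw (-a y)) hp.1 hp.2
        (fun y => mul_nonneg (hq.1 y) (pw_pos _).le)
        (fun y hpy => mul_pos ((hq.1 y).lt_of_ne (Ne.symm (fun h' => hpy (h y h')))) (pw_pos _))
    have hF : Ffun a q = - Real.logb 2 (∑ y, q y * pw (-a y)) := rfl
    rw [hF]
    linarith
  · rw [if_neg h]
    exact le_top

/-- KL value of a Gibbs tilting at critical `lam`. -/
lemma klGibbs (q a : Y → ℝ) (hq : q ∈ probSimplex Y) (lam : ℝ)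
    (hN : ∑ y, q y * a y * pw (-(lam * a y)) = 0) :
    ∃ p ∈ {p ∈ probSimplex Y | ∑ y, p y * a y ≤ 0},
      KLdiv p q = ((Ffun (lam • a) q : ℝ) : EReal) := by
  classical
  set Z := ∑ y, q y * pw (-(lam * a y)) with hZ
  have hZE : Efun (lam • a) q = Z := Efun_smul lam a q
  have hZpos : 0 < Z := by rw [← hZE]; exact Efun_pos hq
  set p : Y → ℝ := fun y => q y * pw (-(lam * a y)) / Z with hpdef
  have hp0 : ∀ y, 0 ≤ p y := fun y => div_nonneg (mul_nonneg (hq.1 y) (pw_pos _).le) hZpos.le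
  have hp1 : ∑ y, p y = 1 := by
    rw [hpdef, ← Finset.sum_div, ← hZ, div_self hZpos.ne']
  have hfeas : ∑ y, p y * a y = 0 := by
    have hrw : ∑ y, p y * a y = (∑ y, q y * a y * pw (-(lam * a y))) / Z := by
      rw [Finset.sum_div]
      exact Finset.sum_congr rfl fun y _ => by rw [hpdef]; ring
    rw [hrw, hN, zero_div]
  have hzero : ∀ y, q y = 0 → p y = 0 := fun y hqy => by simp [hpdef, hqy]
  have hpq : ∀ y, p y ≠ 0 → q y ≠ 0 := fun y hpy hqy => hpy (hzero y hqy)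
  refine ⟨p, ⟨⟨hp0, hp1⟩, by rw [hfeas]⟩, ?_⟩
  rw [KLdiv, if_pos hzero]
  have hreal : (∑ y, if p y = 0 then 0 else p y * Real.logb 2 (p y / q y))
      = Ffun (lam • a) q := by
    have hterm : ∀ y, (if p y = 0 then 0 else p y * Real.logb 2 (p y / q y))
        = (-lam) * (p y * a y) - p y * Real.logb 2 Z := by
      intro y
      by_cases hpy : p y = 0
      · simp [hpy]
      · have hqy : q y ≠ 0 := hpq y hpy
        rw [if_neg hpy]
        have hpqv : p y / q y = pw (-(lam * a y)) / Z := by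
          rw [hpdef]
          rw [div_div, mul_comm Z (q y), ← div_div, mul_comm (q y) (pw (-(lam * a y))),
            mul_div_assoc, div_self hqy, mul_one]
        rw [hpqv, Real.logb_div (pw_ne _) hZpos.ne', logb_pw]
        ring
    calc (∑ y, if p y = 0 then 0 else p y * Real.logb 2 (p y / q y))
        = ∑ y, ((-lam) * (p y * a y) - p y * Real.logb 2 Z) :=
          Finset.sum_congr rfl fun y _ => hterm y
      _ = (-lam) * (∑ y, p y * a y) - (∑ y, p y) * Real.logb 2 Z := by
          rw [Finset.sum_sub_distrib, ← Finset.mul_sum, ← Finset.sum_mul]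
      _ = - Real.logb 2 Z := by rw [hfeas, hp1]; ring
      _ = Ffun (lam • a) q := by rw [Ffun, hZE]
  rw [hreal]

/-- KL value of the restriction of `q` to `{a = 0}`. -/
lemma klRestrict (q a : Y → ℝ) (hq : q ∈ probSimplex Y)
    (hS : 0 < ∑ y, (if a y = 0 then q y else 0)) :
    ∃ p ∈ {p ∈ probSimplex Y | ∑ y, p y * a y ≤ 0},
      KLdiv p q = ((- Real.logb 2 (∑ y, (if a y = 0 then q y else 0)) : ℝ) : EReal) := by
  classical
  set S := ∑ y, (if a y = 0 then q y else 0) with hSdef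
  set p : Y → ℝ := fun y => (if a y = 0 then q y else 0) / S with hpdef
  have hp0 : ∀ y, 0 ≤ p y := fun y => div_nonneg (by split <;> simp [hq.1 y]) hS.le
  have hp1 : ∑ y, p y = 1 := by
    rw [hpdef, ← Finset.sum_div, ← hSdef, div_self hS.ne']
  have hfeas : ∑ y, p y * a y = 0 := by
    refine Finset.sum_eq_zero fun y _ => ?_
    rw [hpdef]
    by_cases h : a y = 0 <;> simp [h]
  have hzero : ∀ y, q y = 0 → p y = 0 := fun y hqy => by
    rw [hpdef]
    by_cases h : a y = 0 <;> simp [h, hqy]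
  refine ⟨p, ⟨⟨hp0, hp1⟩, by rw [hfeas]⟩, ?_⟩
  rw [KLdiv, if_pos hzero]
  have hreal : (∑ y, if p y = 0 then 0 else p y * Real.logb 2 (p y / q y))
      = - Real.logb 2 S := by
    have hterm : ∀ y, (if p y = 0 then 0 else p y * Real.logb 2 (p y / q y))
        = p y * (- Real.logb 2 S) := by
      intro y
      by_cases hpy : p y = 0
      · simp [hpy]
      · have hay : a y = 0 := by
          by_contra hay
          exact hpy (by simp [hpdef, hay])
        have hqy : q y ≠ 0 := by
          intro hqy
          exact hpy (hzero y hqy)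
        rw [if_neg hpy]
        have hpv : p y = q y / S := by rw [hpdef]; simp [hay]
        have hpqv : p y / q y = S⁻¹ := by
          rw [hpv, div_div, mul_comm S (q y), ← div_div, div_self hqy, one_div]
        rw [hpqv, Real.logb_inv]
    calc (∑ y, if p y = 0 then 0 else p y * Real.logb 2 (p y / q y))
        = ∑ y, p y * (- Real.logb 2 S) := Finset.sum_congr rfl fun y _ => hterm y
      _ = (∑ y, p y) * (- Real.logb 2 S) := by rw [← Finset.sum_mul]
      _ = - Real.logb 2 S := by rw [hp1, one_mul]
  rw [hreal]

lemma tendstoE (q a : Y → ℝ) (hge : ∀ y, q y ≠ 0 → 0 ≤ a y) :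
    Tendsto (fun lam : ℝ => ∑ y, q y * pw (-(lam * a y))) atTop
      (𝓝 (∑ y, (if a y = 0 then q y else 0))) := by
  classical
  apply tendsto_finset_sum
  intro y _
  by_cases h0 : a y = 0
  · simpa [h0, pw_zero] using (tendsto_const_nhds : Tendsto (fun _ : ℝ => q y) atTop _)
  · by_cases hq0 : q y = 0
    · simpa [hq0, h0] using (tendsto_const_nhds : Tendsto (fun _ : ℝ => (0:ℝ)) atTop _)
    · have hpos : 0 < a y := lt_of_le_of_ne (hge y hq0) (Ne.symm h0)
      rw [if_neg h0]
      have hgoal : Tendsto (fun lam : ℝ => pw (-(lam * a y))) atTop (𝓝 0) := by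
        have hcomp : (fun lam : ℝ => pw (-(lam * a y)))
            = Real.exp ∘ (fun lam : ℝ => (-(Real.log 2 * a y)) * lam) := by
          funext lam
          simp only [pw, Function.comp_apply]
          congr 1
          ring
        rw [hcomp]
        exact Real.tendsto_exp_atBot.comp
          ((tendsto_const_mul_atBot_of_neg (by nlinarith [log2_pos])).2 tendsto_id)
      simpa using hgoal.const_mul (q y)

/-- Strong direction: for a cone `A`, each inner infimum is at most `sup_{a' ∈ A} F(a',q)`. -/
lemma K_le_supF (A : Set (Y → ℝ)) (hcone : ∀ a ∈ A, ∀ γ : ℝ, 0 ≤ γ → γ • a ∈ A)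
    (q : Y → ℝ) (hq : q ∈ probSimplex Y) (a : Y → ℝ) (ha : a ∈ A) :
    (⨅ p ∈ {p ∈ probSimplex Y | ∑ y, p y * a y ≤ 0}, KLdiv p q)
      ≤ ⨆ a' ∈ A, ((Ffun a' q : ℝ) : EReal) := by
  classical
  by_cases hqa : ∑ y, q y * a y ≤ 0
  · -- take p = q
    have hKq : KLdiv q q = ((0:ℝ) : EReal) := by
      rw [KLdiv, if_pos (fun y h => h)]
      norm_cast
      refine Finset.sum_eq_zero fun y _ => ?_
      by_cases h : q y = 0
      · simp [h]
      · simp [h, div_self h]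
    have hmem : q ∈ {p ∈ probSimplex Y | ∑ y, p y * a y ≤ 0} := ⟨hq, hqa⟩
    refine le_trans (iInf₂_le q hmem) ?_
    rw [hKq]
    have h0A : (0:ℝ) • a ∈ A := hcone a ha 0 le_rfl
    have hF0 : Ffun ((0:ℝ) • a) q = 0 := by
      have hE : Efun ((0:ℝ) • a) q = 1 := by
        rw [Efun_smul]
        simpa [pw_zero] using hq.2
      rw [Ffun, hE, Real.logb_one, neg_zero]
    calc ((0:ℝ) : EReal) = ((Ffun ((0:ℝ) • a) q : ℝ) : EReal) := by rw [hF0]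
      _ ≤ _ := le_iSup₂ (f := fun a' (_ : a' ∈ A) => ((Ffun a' q : ℝ) : EReal)) ((0:ℝ) • a) h0A
  · push_neg at hqa
    by_cases hneg : ∃ y, q y ≠ 0 ∧ a y < 0
    · -- IVT case
      obtain ⟨y₀, hq0, ha0⟩ := hneg
      have hq0' : 0 < q y₀ := (hq.1 y₀).lt_of_ne (Ne.symm hq0)
      set N : ℝ → ℝ := fun lam => ∑ y, q y * a y * pw (-(lam * a y)) with hNdef
      have hNcont : Continuous N := by
        apply continuous_finset_sum
        intro y _
        simp only [pw]
        fun_prop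
      have hN0 : 0 < N 0 := by
        have : N 0 = ∑ y, q y * a y := by
          rw [hNdef]
          refine Finset.sum_congr rfl fun y _ => ?_
          norm_num [pw_zero]
        rw [this]
        exact hqa
      set C := ∑ y, max 0 (q y * a y) with hCdef
      have hC0 : 0 ≤ C := Finset.sum_nonneg fun y _ => le_max_left _ _
      have hden : 0 < q y₀ * a y₀ * a y₀ * Real.log 2 := by
        have h1 : 0 < a y₀ * a y₀ := mul_pos_of_neg_of_neg ha0 ha0
        nlinarith [mul_pos (mul_pos hq0' h1) log2_pos]
      set lam1 : ℝ := max 0 ((C + 1) / (q y₀ * a y₀ * a y₀ * Real.log 2)) with hlam1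
      have hlam10 : 0 ≤ lam1 := le_max_left _ _
      have hNlam1 : N lam1 ≤ 0 := by
        have hbound : ∀ y, q y * a y * pw (-(lam1 * a y)) ≤ max 0 (q y * a y) := by
          intro y
          rcases le_or_gt (a y) 0 with h | h
          · have hle : q y * a y ≤ 0 := mul_nonpos_of_nonneg_of_nonpos (hq.1 y) h
            calc q y * a y * pw (-(lam1 * a y)) ≤ 0 :=
                  mul_nonpos_of_nonpos_of_nonneg hle (pw_pos _).le
              _ ≤ max 0 (q y * a y) := le_max_left _ _
          · have h1 : pw (-(lam1 * a y)) ≤ 1 := by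
              rw [← pw_zero]
              exact pw_le_pw (by nlinarith)
            calc q y * a y * pw (-(lam1 * a y)) ≤ q y * a y * 1 :=
                  mul_le_mul_of_nonneg_left h1 (mul_nonneg (hq.1 y) h.le)
              _ = q y * a y := mul_one _
              _ ≤ max 0 (q y * a y) := le_max_right _ _
        have hlam1ge : C + 1 ≤ q y₀ * a y₀ * a y₀ * Real.log 2 * lam1 := by
          have hmax := le_max_right (0:ℝ) ((C + 1) / (q y₀ * a y₀ * a y₀ * Real.log 2))
          rw [← hlam1] at hmax
          calc C + 1 = (C + 1) / (q y₀ * a y₀ * a y₀ * Real.log 2)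
                * (q y₀ * a y₀ * a y₀ * Real.log 2) := (div_mul_cancel₀ _ hden.ne').symm
            _ ≤ lam1 * (q y₀ * a y₀ * a y₀ * Real.log 2) :=
                mul_le_mul_of_nonneg_right hmax hden.le
            _ = q y₀ * a y₀ * a y₀ * Real.log 2 * lam1 := by ring
        have hexp : Real.log 2 * (lam1 * (-a y₀)) + 1 ≤ pw (lam1 * (-a y₀)) := by
          simpa [pw] using Real.add_one_le_exp (Real.log 2 * (lam1 * (-a y₀)))
        have hmain : q y₀ * a y₀ * pw (-(lam1 * a y₀)) ≤ -(C + 1) := by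
          rw [show -(lam1 * a y₀) = lam1 * (-a y₀) by ring]
          have hq0a : 0 ≤ q y₀ * (-a y₀) := mul_nonneg hq0'.le (neg_nonneg.2 ha0.le)
          nlinarith [mul_le_mul_of_nonneg_left hexp hq0a, hlam1ge]
        have hsplit : N lam1 = q y₀ * a y₀ * pw (-(lam1 * a y₀))
            + ∑ y ∈ Finset.univ.erase y₀, q y * a y * pw (-(lam1 * a y)) := by
          rw [hNdef]
          exact (Finset.add_sum_erase _ _ (Finset.mem_univ y₀)).symm
        have hsum_le : ∑ y ∈ Finset.univ.erase y₀, q y * a y * pw (-(lam1 * a y)) ≤ C := by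
          calc ∑ y ∈ Finset.univ.erase y₀, q y * a y * pw (-(lam1 * a y))
              ≤ ∑ y ∈ Finset.univ.erase y₀, max 0 (q y * a y) :=
                Finset.sum_le_sum fun y _ => hbound y
            _ ≤ C :=
                Finset.sum_le_sum_of_subset_of_nonneg (Finset.subset_univ _)
                  (fun y _ _ => le_max_left _ _)
        rw [hsplit]
        linarith
      obtain ⟨lam, hlammem, hNlam⟩ :=
        intermediate_value_Icc' hlam10 hNcont.continuousOn ⟨hNlam1, hN0.le⟩
      obtain ⟨p, hpmem, hKL⟩ := klGibbs q a hq lam hNlam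
      refine le_trans (iInf₂_le p hpmem) ?_
      rw [hKL]
      exact le_iSup₂ (f := fun a' (_ : a' ∈ A) => ((Ffun a' q : ℝ) : EReal)) (lam • a)
        (hcone a ha lam hlammem.1)
    · push_neg at hneg
      have hge : ∀ y, q y ≠ 0 → 0 ≤ a y := fun y hy => not_lt.1 (by simpa using hneg y hy)
      set S := ∑ y, (if a y = 0 then q y else 0) with hSdef
      have hS0 : 0 ≤ S := Finset.sum_nonneg fun y _ => by
        split
        · exact hq.1 y
        · exact le_rfl
      have htd := tendstoE q a hge
      rcases hS0.lt_or_eq with hS | hS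
      · obtain ⟨p, hpmem, hKL⟩ := klRestrict q a hq hS
        refine le_trans (iInf₂_le p hpmem) ?_
        rw [hKL]
        have hlim : Tendsto (fun lam : ℝ => ((Ffun (lam • a) q : ℝ) : EReal)) atTop
            (𝓝 ((- Real.logb 2 S : ℝ) : EReal)) := by
          rw [EReal.tendsto_coe]
          have hE : Tendsto (fun lam : ℝ => Efun (lam • a) q) atTop (𝓝 S) := by
            have : (fun lam : ℝ => Efun (lam • a) q)
                = fun lam : ℝ => ∑ y, q y * pw (-(lam * a y)) := by
              funext lam; exact Efun_smul lam a q
            rw [this]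
            exact htd
          have hlog := (hE.log hS.ne').div_const (Real.log 2)
          have : (fun lam : ℝ => Ffun (lam • a) q)
              = fun lam : ℝ => -(Real.log (Efun (lam • a) q) / Real.log 2) := by
            funext lam; rw [Ffun, Real.logb]
          rw [this]
          exact hlog.neg
        refine le_of_tendsto hlim ?_
        filter_upwards [eventually_ge_atTop (0:ℝ)] with lam hlam
        exact le_iSup₂ (f := fun a' (_ : a' ∈ A) => ((Ffun a' q : ℝ) : EReal)) (lam • a)
          (hcone a ha lam hlam)
      · -- S = 0 : the sup is ⊤
        have hlim : Tendsto (fun lam : ℝ => ((Ffun (lam • a) q : ℝ) : EReal)) atTop (𝓝 ⊤) := by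
          have hE : Tendsto (fun lam : ℝ => Efun (lam • a) q) atTop (𝓝[>] 0) := by
            refine tendsto_nhdsWithin_of_tendsto_nhds_of_eventually_within _ ?_ ?_
            · have : (fun lam : ℝ => Efun (lam • a) q)
                  = fun lam : ℝ => ∑ y, q y * pw (-(lam * a y)) := by
                funext lam; exact Efun_smul lam a q
              rw [this, hS]
              exact htd
            · exact Eventually.of_forall fun lam => Efun_pos hq
          have hlog : Tendsto (fun lam : ℝ => Real.log (Efun (lam • a) q)) atTop atBot :=
            Real.tendsto_log_nhdsGT_zero.comp hE
          have hdiv : Tendsto (fun lam : ℝ => Real.log (Efun (lam • a) q) / Real.log 2)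
              atTop atBot := (tendsto_div_const_atBot_of_pos log2_pos).2 hlog
          have hF : Tendsto (fun lam : ℝ => Ffun (lam • a) q) atTop atTop := by
            have : (fun lam : ℝ => Ffun (lam • a) q)
                = fun lam : ℝ => -(Real.log (Efun (lam • a) q) / Real.log 2) := by
              funext lam; rw [Ffun, Real.logb]
            rw [this]
            exact tendsto_neg_atTop_iff.2 hdiv
          rw [EReal.tendsto_nhds_top_iff_real]
          intro x
          filter_upwards [hF.eventually_gt_atTop x] with lam hlam
          exact_mod_cast hlam
        have htop : (⊤ : EReal) ≤ ⨆ a' ∈ A, ((Ffun a' q : ℝ) : EReal) := by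
          refine le_of_tendsto hlim ?_
          filter_upwards [eventually_ge_atTop (0:ℝ)] with lam hlam
          exact le_iSup₂ (f := fun a' (_ : a' ∈ A) => ((Ffun a' q : ℝ) : EReal)) (lam • a)
            (hcone a ha lam hlam)
        exact le_trans le_top htop

/-- `infoCap` in terms of `F`. -/
lemma infoCap_eq_J (A : Set (Y → ℝ)) (hcone : ∀ a ∈ A, ∀ γ : ℝ, 0 ≤ γ → γ • a ∈ A) :
    infoCap A = ⨅ q ∈ probSimplex Y, ⨆ a ∈ A, ((Ffun a q : ℝ) : EReal) := by
  rw [infoCap]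
  refine le_antisymm ?_ ?_
  · exact iInf₂_mono fun q hq => iSup₂_le fun a ha => K_le_supF A hcone q hq a ha
  · refine iInf₂_mono fun q hq => iSup₂_le fun a ha => ?_
    exact le_trans (le_iInf₂ fun p hp => F_le_KLdiv a p q hq hp.1 hp.2)
      (le_iSup₂ (f := fun a' (_ : a' ∈ A) =>
        (⨅ p ∈ {p ∈ probSimplex Y | ∑ y, p y * a' y ≤ 0}, KLdiv p q)) a ha)

lemma J_nonneg (A : Set (Y → ℝ)) (hcone : ∀ a ∈ A, ∀ γ : ℝ, 0 ≤ γ → γ • a ∈ A)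
    (hAne : A.Nonempty) :
    (0 : EReal) ≤ ⨅ q ∈ probSimplex Y, ⨆ a ∈ A, ((Ffun a q : ℝ) : EReal) := by
  refine le_iInf₂ fun q hq => ?_
  obtain ⟨a₀, ha₀⟩ := hAne
  have h0 : (0 : Y → ℝ) ∈ A := by
    have := hcone a₀ ha₀ 0 le_rfl
    simpa using this
  have hF : Ffun (0 : Y → ℝ) q = 0 := by
    have hE : Efun (0 : Y → ℝ) q = 1 := by
      rw [Efun]
      simpa [pw_zero] using hq.2
    rw [Ffun, hE, Real.logb_one, neg_zero]
  calc (0 : EReal) = ((Ffun (0 : Y → ℝ) q : ℝ) : EReal) := by rw [hF]; rfl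
    _ ≤ _ := le_iSup₂ (f := fun a' (_ : a' ∈ A) => ((Ffun a' q : ℝ) : EReal)) (0 : Y → ℝ) h0

end InfoCapAux

namespace InfoCapAux

open Real Filter Topology Finset

variable {Y Z : Type*} [Fintype Y] [Fintype Z]

lemma lower_bound (A : Set (Y → ℝ)) (B : Set (Z → ℝ))
    (q : Y × Z → ℝ) (hq : q ∈ probSimplex (Y × Z)) :
    (⨅ q' ∈ probSimplex Y, ⨆ a ∈ A, ((Ffun a q' : ℝ) : EReal))
      + (⨅ q' ∈ probSimplex Z, ⨆ b ∈ B, ((Ffun b q' : ℝ) : EReal))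
      ≤ ⨆ s ∈ prodCone A B, ((Ffun s q : ℝ) : EReal) := by
  classical
  refine EReal.add_le_of_forall_lt fun x hx y' hy' => ?_
  obtain ⟨r, hxr, hrJA⟩ := EReal.exists_between_coe_real hx
  obtain ⟨s, hys, hsJB⟩ := EReal.exists_between_coe_real hy'
  set qZ : Z → ℝ := fun z => ∑ y, q (y, z) with hqZ
  have hqZmem : qZ ∈ probSimplex Z := by
    constructor
    · intro z
      exact Finset.sum_nonneg fun y _ => hq.1 (y, z)
    · calc ∑ z, ∑ y, q (y, z) = ∑ y, ∑ z, q (y, z) := Finset.sum_comm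
        _ = ∑ p : Y × Z, q p := (Fintype.sum_prod_type _).symm
        _ = 1 := hq.2
  have hsJB' : ((s : ℝ) : EReal) < ⨆ b ∈ B, ((Ffun b qZ : ℝ) : EReal) :=
    lt_of_lt_of_le hsJB (iInf₂_le qZ hqZmem)
  obtain ⟨b, hb, hsb⟩ : ∃ b ∈ B, s < Ffun b qZ := by
    simpa only [lt_iSup_iff, EReal.coe_lt_coe_iff, exists_prop] using hsJB'
  set Eb := Efun b qZ with hEb
  have hEbpos : 0 < Eb := Efun_pos hqZmem
  set qt : Y → ℝ := fun y => (∑ z, q (y, z) * pw (-(b z))) / Eb with hqt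
  have hqtmem : qt ∈ probSimplex Y := by
    constructor
    · intro y
      exact div_nonneg (Finset.sum_nonneg fun z _ => mul_nonneg (hq.1 _) (pw_pos _).le) hEbpos.le
    · rw [hqt, ← Finset.sum_div]
      have hnum : ∑ y, ∑ z, q (y, z) * pw (-(b z)) = Eb := by
        rw [hEb, Efun, Finset.sum_comm]
        exact Finset.sum_congr rfl fun z _ => (Finset.sum_mul _ _ _).symm
      rw [hnum, div_self hEbpos.ne']
  have hrJA' : ((r : ℝ) : EReal) < ⨆ a ∈ A, ((Ffun a qt : ℝ) : EReal) :=
    lt_of_lt_of_le hrJA (iInf₂_le qt hqtmem)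
  obtain ⟨a, ha, hra⟩ : ∃ a ∈ A, r < Ffun a qt := by
    simpa only [lt_iSup_iff, EReal.coe_lt_coe_iff, exists_prop] using hrJA'
  set s0 : Y × Z → ℝ := fun p => a p.1 + b p.2 with hs0
  have hs0mem : s0 ∈ prodCone A B :=
    ⟨a, ha, b, hb, fun _ => 0, fun _ => le_rfl, by funext p; simp [hs0]⟩
  have hEs0 : Efun s0 q = Eb * Efun a qt := by
    rw [Efun, Fintype.sum_prod_type]
    have h1 : ∀ y, ∑ z, q (y, z) * pw (-s0 (y, z))
        = pw (-a y) * ∑ z, q (y, z) * pw (-(b z)) := by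
      intro y
      rw [Finset.mul_sum]
      refine Finset.sum_congr rfl fun z _ => ?_
      have : -s0 (y, z) = -a y + -(b z) := by rw [hs0]; ring
      rw [this, pw_add]
      ring
    calc ∑ y, ∑ z, q (y, z) * pw (-s0 (y, z))
        = ∑ y, pw (-a y) * ∑ z, q (y, z) * pw (-(b z)) :=
          Finset.sum_congr rfl fun y _ => h1 y
      _ = ∑ y, pw (-a y) * (qt y * Eb) := by
          refine Finset.sum_congr rfl fun y _ => ?_
          rw [hqt, div_mul_cancel₀ _ hEbpos.ne']
      _ = Eb * ∑ y, qt y * pw (-a y) := by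
          rw [Finset.mul_sum]
          exact Finset.sum_congr rfl fun y _ => by ring
      _ = Eb * Efun a qt := rfl
  have hFs0 : Ffun s0 q = Ffun b qZ + Ffun a qt := by
    rw [Ffun, hEs0, Real.logb_mul hEbpos.ne' (Efun_pos hqtmem).ne', Ffun, Ffun, hEb]
    ring
  have hstep : (x + y' : EReal) ≤ ((r + s : ℝ) : EReal) := by
    rw [EReal.coe_add]
    exact add_le_add hxr.le hys.le
  refine le_trans hstep ?_
  refine le_trans ?_ (le_iSup₂ (f := fun s' (_ : s' ∈ prodCone A B) =>
    ((Ffun s' q : ℝ) : EReal)) s0 hs0mem)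
  exact_mod_cast (by linarith : r + s ≤ Ffun s0 q)

lemma upper_bound (A : Set (Y → ℝ)) (B : Set (Z → ℝ))
    (hconeA : ∀ a ∈ A, ∀ γ : ℝ, 0 ≤ γ → γ • a ∈ A) (hAne : A.Nonempty)
    (hconeB : ∀ b ∈ B, ∀ γ : ℝ, 0 ≤ γ → γ • b ∈ B) (hBne : B.Nonempty) :
    (⨅ q ∈ probSimplex (Y × Z), ⨆ s ∈ semiProdCone A B, ((Ffun s q : ℝ) : EReal))
      ≤ (⨅ q' ∈ probSimplex Y, ⨆ a ∈ A, ((Ffun a q' : ℝ) : EReal))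
        + (⨅ q' ∈ probSimplex Z, ⨆ b ∈ B, ((Ffun b q' : ℝ) : EReal)) := by
  classical
  set L := ⨅ q ∈ probSimplex (Y × Z), ⨆ s ∈ semiProdCone A B, ((Ffun s q : ℝ) : EReal) with hL
  set JA := ⨅ q' ∈ probSimplex Y, ⨆ a ∈ A, ((Ffun a q' : ℝ) : EReal) with hJA
  set JB := ⨅ q' ∈ probSimplex Z, ⨆ b ∈ B, ((Ffun b q' : ℝ) : EReal) with hJB
  have hJA0 : (0 : EReal) ≤ JA := J_nonneg A hconeA hAne
  have hJB0 : (0 : EReal) ≤ JB := J_nonneg B hconeB hBne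
  have hJAnb : JA ≠ ⊥ := fun h => by rw [h] at hJA0; simp at hJA0
  have hJBnb : JB ≠ ⊥ := fun h => by rw [h] at hJB0; simp at hJB0
  by_cases hAt : JA = ⊤
  · rw [hAt, EReal.top_add_of_ne_bot hJBnb]
    exact le_top
  by_cases hBt : JB = ⊤
  · rw [hBt, EReal.add_top_of_ne_bot hJAnb]
    exact le_top
  obtain ⟨x, hx⟩ : ∃ x : ℝ, JA = ((x : ℝ) : EReal) := ⟨JA.toReal, (EReal.coe_toReal hAt hJAnb).symm⟩
  obtain ⟨y, hy⟩ : ∃ y : ℝ, JB = ((y : ℝ) : EReal) := ⟨JB.toReal, (EReal.coe_toReal hBt hJBnb).symm⟩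
  have key : ∀ u v : ℝ, x < u → y < v → L ≤ ((u + v : ℝ) : EReal) := by
    intro u v hu hv
    have hu' : JA < ((u : ℝ) : EReal) := by rw [hx]; exact_mod_cast hu
    have hv' : JB < ((v : ℝ) : EReal) := by rw [hy]; exact_mod_cast hv
    obtain ⟨qA, hqA, hqAlt⟩ : ∃ qA ∈ probSimplex Y,
        (⨆ a ∈ A, ((Ffun a qA : ℝ) : EReal)) < ((u : ℝ) : EReal) := by
      simpa only [hJA, iInf_lt_iff, exists_prop] using hu'
    obtain ⟨qB, hqB, hqBlt⟩ : ∃ qB ∈ probSimplex Z,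
        (⨆ b ∈ B, ((Ffun b qB : ℝ) : EReal)) < ((v : ℝ) : EReal) := by
      simpa only [hJB, iInf_lt_iff, exists_prop] using hv'
    set q : Y × Z → ℝ := fun p => qA p.1 * qB p.2 with hqdef
    have hqmem : q ∈ probSimplex (Y × Z) := by
      constructor
      · intro p
        exact mul_nonneg (hqA.1 _) (hqB.1 _)
      · rw [Fintype.sum_prod_type]
        calc ∑ y', ∑ z, qA y' * qB z = ∑ y', qA y' * ∑ z, qB z :=
              Finset.sum_congr rfl fun y' _ => (Finset.mul_sum _ _ _).symm
          _ = 1 := by rw [hqB.2]; simpa using hqA.2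
    refine le_trans (iInf₂_le q hqmem) ?_
    refine iSup₂_le ?_
    rintro s ⟨a, ha, f, hf, rfl⟩
    have hFa : Ffun a qA < u := by
      have h1 : ((Ffun a qA : ℝ) : EReal) < ((u : ℝ) : EReal) :=
        lt_of_le_of_lt (le_iSup₂ (f := fun a' (_ : a' ∈ A) => ((Ffun a' qA : ℝ) : EReal)) a ha)
          hqAlt
      exact_mod_cast h1
    have hTy : ∀ y', pw (-v) < Efun (f y') qB := by
      intro y'
      have hFf : Ffun (f y') qB < v := by
        have h1 : ((Ffun (f y') qB : ℝ) : EReal) < ((v : ℝ) : EReal) :=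
          lt_of_le_of_lt (le_iSup₂ (f := fun b' (_ : b' ∈ B) => ((Ffun b' qB : ℝ) : EReal))
            (f y') (hf y')) hqBlt
        exact_mod_cast h1
      have hE : 0 < Efun (f y') qB := Efun_pos hqB
      have hv2 : -v < Real.logb 2 (Efun (f y') qB) := by
        rw [Ffun] at hFf
        linarith
      calc pw (-v) < pw (Real.logb 2 (Efun (f y') qB)) := pw_lt_pw hv2
        _ = Efun (f y') qB := pw_logb hE
    have hexpand : ∀ y', ∑ z, q (y', z) * pw (-(a y' + f y' z))
        = qA y' * pw (-a y') * Efun (f y') qB := by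
      intro y'
      rw [Efun, Finset.mul_sum]
      refine Finset.sum_congr rfl fun z _ => ?_
      have : -(a y' + f y' z) = -a y' + -(f y' z) := by ring
      rw [this, pw_add, hqdef]
      ring
    have hEs : pw (-v) * Efun a qA ≤ Efun (fun p => a p.1 + f p.1 p.2) q := by
      have h0 : Efun (fun p => a p.1 + f p.1 p.2) q
          = ∑ y', qA y' * pw (-a y') * Efun (f y') qB := by
        rw [Efun, Fintype.sum_prod_type]
        exact Finset.sum_congr rfl fun y' _ => hexpand y'
      have h1 : ∑ y', qA y' * pw (-a y') * pw (-v)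
          ≤ ∑ y', qA y' * pw (-a y') * Efun (f y') qB :=
        Finset.sum_le_sum fun y' _ =>
          mul_le_mul_of_nonneg_left (hTy y').le (mul_nonneg (hqA.1 y') (pw_pos _).le)
      have h2 : ∑ y', qA y' * pw (-a y') * pw (-v) = pw (-v) * Efun a qA := by
        rw [Efun, Finset.mul_sum]
        exact Finset.sum_congr rfl fun y' _ => by ring
      rw [h0, ← h2]
      exact h1
    have hFs : Ffun (fun p => a p.1 + f p.1 p.2) q ≤ v + Ffun a qA := by
      have hlb : 0 < pw (-v) * Efun a qA := mul_pos (pw_pos _) (Efun_pos hqA)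
      have hlog := Real.log_le_log hlb hEs
      have hlogb : Real.logb 2 (pw (-v) * Efun a qA)
          ≤ Real.logb 2 (Efun (fun p => a p.1 + f p.1 p.2) q) := by
        rw [Real.logb, Real.logb]
        exact div_le_div_of_nonneg_right hlog log2_pos.le
      rw [Real.logb_mul (pw_ne _) (Efun_pos hqA).ne', logb_pw] at hlogb
      rw [Ffun, Ffun]
      linarith
    have : Ffun (fun p => a p.1 + f p.1 p.2) q ≤ u + v := by linarith
    exact_mod_cast this
  rw [hx, hy, ← EReal.coe_add]
  by_contra hcon
  push_neg at hcon
  obtain ⟨w, hw1, hw2⟩ := EReal.exists_between_coe_real hcon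
  have hxy : x + y < w := by exact_mod_cast hw1
  have hkey := key (x + (w - x - y) / 2) (y + (w - x - y) / 2) (by linarith) (by linarith)
  rw [show x + (w - x - y) / 2 + (y + (w - x - y) / 2) = w by ring] at hkey
  exact absurd (lt_of_lt_of_le hw2 hkey) (lt_irrefl _)

lemma prod_subset_semi (A : Set (Y → ℝ)) (B : Set (Z → ℝ))
    (hBdc : ∀ b ∈ B, ∀ c : Z → ℝ, (∀ z, 0 ≤ c z) → b - c ∈ B) :
    prodCone A B ⊆ semiProdCone A B := by
  rintro s ⟨a, ha, b, hb, c, hc, rfl⟩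
  refine ⟨a, ha, fun y => b - fun z => c (y, z),
    fun y => hBdc b hb _ (fun z => hc (y, z)), ?_⟩
  funext p
  simp only [Pi.sub_apply]
  ring

lemma semi_scaling (A : Set (Y → ℝ)) (B : Set (Z → ℝ))
    (hconeA : ∀ a ∈ A, ∀ γ : ℝ, 0 ≤ γ → γ • a ∈ A)
    (hconeB : ∀ b ∈ B, ∀ γ : ℝ, 0 ≤ γ → γ • b ∈ B) :
    ∀ s ∈ semiProdCone A B, ∀ γ : ℝ, 0 ≤ γ → γ • s ∈ semiProdCone A B := by
  rintro s ⟨a, ha, f, hf, rfl⟩ γ hγ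
  refine ⟨γ • a, hconeA a ha γ hγ, fun y => γ • f y,
    fun y => hconeB (f y) (hf y) γ hγ, ?_⟩
  funext p
  simp only [Pi.smul_apply, smul_eq_mul]
  ring

end InfoCapAux

open InfoCapAux in
/-- Additivity of the information capacity: `I(A ⊗ B) = I(A ⋉ B) = I(A) + I(B)`. -/
theorem infoCap_additive {Y Z : Type*} [Fintype Y] [Fintype Z]
    (A : Set (Y → ℝ)) (B : Set (Z → ℝ))
    (hA : IsDCCone A) (hB : IsDCCone B)
    (hAne : A.Nonempty) (hBne : B.Nonempty) :
    infoCap (prodCone A B) = infoCap A + infoCap B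
      ∧ infoCap (semiProdCone A B) = infoCap A + infoCap B := by
  classical
  set JA := ⨅ q ∈ probSimplex Y, ⨆ a ∈ A, ((Ffun a q : ℝ) : EReal) with hJAdef
  set JB := ⨅ q ∈ probSimplex Z, ⨆ b ∈ B, ((Ffun b q : ℝ) : EReal) with hJBdef
  have hICA : infoCap A = JA := infoCap_eq_J A hA.1
  have hICB : infoCap B = JB := infoCap_eq_J B hB.1
  have hprod_ge : JA + JB ≤ infoCap (prodCone A B) := by
    refine le_trans (le_iInf₂ fun q hq => lower_bound A B q hq) ?_
    refine iInf₂_mono fun q hq => iSup₂_mono fun s _ => le_iInf₂ fun p hp => ?_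
    exact F_le_KLdiv s p q hq hp.1 hp.2
  have hsemi_le : infoCap (semiProdCone A B) ≤ JA + JB := by
    refine le_trans ?_ (upper_bound A B hA.1 hAne hB.1 hBne)
    exact iInf₂_mono fun q hq => iSup₂_le fun s hs =>
      K_le_supF (semiProdCone A B) (semi_scaling A B hA.1 hB.1) q hq s hs
  have hmono : infoCap (prodCone A B) ≤ infoCap (semiProdCone A B) :=
    iInf₂_mono fun q _ => iSup_le_iSup_of_subset (prod_subset_semi A B hB.2)
  have h1 : infoCap (prodCone A B) = JA + JB :=
    le_antisymm (hmono.trans hsemi_le) hprod_ge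
  have h2 : infoCap (semiProdCone A B) = JA + JB :=
    le_antisymm hsemi_le (hprod_ge.trans hmono)
  rw [hICA, hICB]
  exact ⟨h1, h2⟩

end
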